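/- Let R be the curvature tensor built from the Christoffel symbols of g_f by R(∂_i, ∂_j)∂_k = Σ_l ( ∂_i Γ^l_{jk} − ∂_j Γ^l_{ik} + Σ_m (Γ^l_{im} Γ^m_{jk} − Γ^l_{jm} Γ^m_{ik}) ) ∂_l. Then R(∂_y, ∂_z)∂_y = ½ f_{yy} ∂_x and R(∂_y, ∂_z)∂_z = −(ε/2) f_{yy} ∂_y, and all other components vanish: R(∂_i, ∂_j)∂_k = 0 whenever {i, j} ≠ {y, z} or k = x; in particular R(∂_x, v)w = 0 and R(v, ∂_x)w = 0 for all coordinate vectors v, w. -/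

import Mathlib

open Matrix

/-- The Christoffel symbols `Γ^k_{ij}` of the strict Walker 3-manifold, at the point
with coordinates `(y, z)`: the only nonzero ones are `Γ^x_{yz} = Γ^x_{zy} = f_y/2`,
`Γ^x_{zz} = f_z/2` and `Γ^y_{zz} = -(ε/2) f_y` (indices `x = 0`, `y = 1`, `z = 2`). -/
noncomputable def Γf (ε : ℝ) (fy fz : ℝ → ℝ → ℝ) (y z : ℝ) (k i j : Fin 3) : ℝ :=
  if k = 0 ∧ ((i = 1 ∧ j = 2) ∨ (i = 2 ∧ j = 1)) then fy y z / 2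
  else if k = 0 ∧ i = 2 ∧ j = 2 then fz y z / 2
  else if k = 1 ∧ i = 2 ∧ j = 2 then -(ε / 2) * fy y z
  else 0

/-- The coordinate partial derivative `∂_dir Γ^k_{ij}` of the Christoffel symbols:
`Γ` is linear in the values `(f_y, f_z)`, so `∂_y Γ` replaces `(f_y, f_z)` by
`(f_yy, f_zy)`, `∂_z Γ` replaces them by `(f_yz, f_zz)`, and `∂_x Γ = 0`. -/
noncomputable def DΓf (ε : ℝ) (fyy fyz fzy fzz : ℝ → ℝ → ℝ) (y z : ℝ)
    (dir k i j : Fin 3) : ℝ :=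
  if dir = 1 then Γf ε fyy fzy y z k i j
  else if dir = 2 then Γf ε fyz fzz y z k i j
  else 0

/-- The curvature tensor `R(∂_i, ∂_j)∂_k = Σ_l (∂_i Γ^l_{jk} − ∂_j Γ^l_{ik}
+ Σ_m (Γ^l_{im} Γ^m_{jk} − Γ^l_{jm} Γ^m_{ik})) ∂_l` of the strict Walker 3-manifold. -/
noncomputable def Rcurv (ε : ℝ) (fy fz fyy fyz fzy fzz : ℝ → ℝ → ℝ) (y z : ℝ)
    (i j k : Fin 3) : Fin 3 → ℝ := fun l =>
  DΓf ε fyy fyz fzy fzz y z i l j k - DΓf ε fyy fyz fzy fzz y z j l i k +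
    ∑ m : Fin 3, (Γf ε fy fz y z l i m * Γf ε fy fz y z m j k -
      Γf ε fy fz y z l j m * Γf ε fy fz y z m i k)

lemma mixed_symm (f fy fz fyz fzy : ℝ → ℝ → ℝ)
    (hf : ContDiff ℝ (⊤ : ℕ∞) (Function.uncurry f))
    (hfy : ∀ y z : ℝ, HasDerivAt (fun t => f t z) (fy y z) y)
    (hfz : ∀ y z : ℝ, HasDerivAt (fun t => f y t) (fz y z) z)
    (hfyz : ∀ y z : ℝ, HasDerivAt (fun t => fy y t) (fyz y z) z)
    (hfzy : ∀ y z : ℝ, HasDerivAt (fun t => fz t z) (fzy y z) y) :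
    ∀ y z : ℝ, fyz y z = fzy y z := by
  intro y z
  set F := Function.uncurry f with hF
  set g := fun p : ℝ × ℝ => fderiv ℝ F p with hgdef
  have hFd : ∀ p : ℝ × ℝ, HasFDerivAt F (g p) p := fun p =>
    (hf.differentiable (by simp) p).hasFDerivAt
  have hg : Differentiable ℝ g := (hf.fderiv_right (m := 1) (by exact WithTop.coe_le_coe.mpr le_top)).differentiable one_ne_zero
  have hfy' : ∀ y z : ℝ, fy y z = g (y, z) (1, 0) := by
    intro y z
    have h1 : HasDerivAt (fun t => F (t, z)) (g (y, z) ((1 : ℝ), (0 : ℝ))) y := by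
      have hγ : HasDerivAt (fun t : ℝ => (t, z)) ((1 : ℝ), (0 : ℝ)) y :=
        HasDerivAt.prodMk (hasDerivAt_id y) (hasDerivAt_const y z)
      exact (hFd (y, z)).comp_hasDerivAt y hγ
    exact (hfy y z).unique h1
  have hfz' : ∀ y z : ℝ, fz y z = g (y, z) (0, 1) := by
    intro y z
    have h1 : HasDerivAt (fun t => F (y, t)) (g (y, z) ((0 : ℝ), (1 : ℝ))) z := by
      have hγ : HasDerivAt (fun t : ℝ => (y, t)) ((0 : ℝ), (1 : ℝ)) z :=
        HasDerivAt.prodMk (hasDerivAt_const z y) (hasDerivAt_id z)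
      exact (hFd (y, z)).comp_hasDerivAt z hγ
    exact (hfz y z).unique h1
  have h2 : HasDerivAt (fun t => g (y, t)) (fderiv ℝ g (y, z) ((0 : ℝ), (1 : ℝ))) z :=
    (hg (y, z)).hasFDerivAt.comp_hasDerivAt z
      (HasDerivAt.prodMk (hasDerivAt_const z y) (hasDerivAt_id z))
  have h3 : HasDerivAt (fun t => g (t, z)) (fderiv ℝ g (y, z) ((1 : ℝ), (0 : ℝ))) y :=
    (hg (y, z)).hasFDerivAt.comp_hasDerivAt y
      (HasDerivAt.prodMk (hasDerivAt_id y) (hasDerivAt_const y z))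
  have h2' : HasDerivAt (fun t => fy y t)
      (fderiv ℝ g (y, z) ((0 : ℝ), (1 : ℝ)) ((1 : ℝ), (0 : ℝ))) z := by
    have := h2.clm_apply (hasDerivAt_const z ((1 : ℝ), (0 : ℝ)))
    simp only [map_zero, add_zero] at this
    refine HasDerivAt.congr_deriv (this.congr_of_eventuallyEq ?_) rfl
    filter_upwards with t using hfy' y t
  have h3' : HasDerivAt (fun t => fz t z)
      (fderiv ℝ g (y, z) ((1 : ℝ), (0 : ℝ)) ((0 : ℝ), (1 : ℝ))) y := by
    have := h3.clm_apply (hasDerivAt_const y ((0 : ℝ), (1 : ℝ)))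
    simp only [map_zero, add_zero] at this
    refine HasDerivAt.congr_deriv (this.congr_of_eventuallyEq ?_) rfl
    filter_upwards with t using hfz' t z
  have hsym := second_derivative_symmetric hFd (hg (y, z)).hasFDerivAt
    ((0 : ℝ), (1 : ℝ)) ((1 : ℝ), (0 : ℝ))
  rw [(hfyz y z).unique h2', (hfzy y z).unique h3', hsym]

/-- The only nonzero components of the curvature tensor of the strict Walker
3-manifold are `R(∂_y, ∂_z)∂_y = (f_yy/2) ∂_x` and `R(∂_y, ∂_z)∂_z = −(ε/2) f_yy ∂_y`
(up to the antisymmetry in `(i, j)`): `R(∂_i, ∂_j)∂_k = 0` whenever `{i, j} ≠ {y, z}`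
or `k = x`; in particular `R(∂_x, v)w = 0 = R(v, ∂_x)w`. -/
theorem stmt_4 (ε : ℝ) (hε : ε = 1 ∨ ε = -1) (f fy fz fyy fyz fzy fzz : ℝ → ℝ → ℝ)
    (hf : ContDiff ℝ (⊤ : ℕ∞) (Function.uncurry f))
    (hfy : ∀ y z : ℝ, HasDerivAt (fun t => f t z) (fy y z) y)
    (hfz : ∀ y z : ℝ, HasDerivAt (fun t => f y t) (fz y z) z)
    (hfyy : ∀ y z : ℝ, HasDerivAt (fun t => fy t z) (fyy y z) y)
    (hfyz : ∀ y z : ℝ, HasDerivAt (fun t => fy y t) (fyz y z) z)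
    (hfzy : ∀ y z : ℝ, HasDerivAt (fun t => fz t z) (fzy y z) y)
    (hfzz : ∀ y z : ℝ, HasDerivAt (fun t => fz y t) (fzz y z) z) :
    ∀ y z : ℝ,
      Rcurv ε fy fz fyy fyz fzy fzz y z 1 2 1 = ![fyy y z / 2, 0, 0] ∧
      Rcurv ε fy fz fyy fyz fzy fzz y z 1 2 2 = ![0, -(ε / 2) * fyy y z, 0] ∧
      (∀ i j k : Fin 3, (¬((i = 1 ∧ j = 2) ∨ (i = 2 ∧ j = 1)) ∨ k = 0) →
        Rcurv ε fy fz fyy fyz fzy fzz y z i j k = 0) ∧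
      (∀ v w : Fin 3, Rcurv ε fy fz fyy fyz fzy fzz y z 0 v w = 0 ∧
        Rcurv ε fy fz fyy fyz fzy fzz y z v 0 w = 0) := by
  intro y z
  have key := mixed_symm f fy fz fyz fzy hf hfy hfz hfyz hfzy y z
  refine ⟨?_, ?_, ?_, ?_⟩
  · funext l; fin_cases l <;>
      simp [Rcurv, DΓf, Γf, Fin.sum_univ_three, key]
  · funext l; fin_cases l <;>
      simp [Rcurv, DΓf, Γf, Fin.sum_univ_three, key]
  · intro i j k h; funext l
    clear hε hf hfy hfz hfyy hfyz hfzy hfzz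
    fin_cases i <;> fin_cases j <;> fin_cases k <;> fin_cases l <;>
      simp_all [Rcurv, DΓf, Γf, Fin.sum_univ_three]
  · intro v w
    constructor <;> funext l <;> fin_cases v <;> fin_cases w <;> fin_cases l <;>
      simp [Rcurv, DΓf, Γf, Fin.sum_univ_three, key]
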